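/- arXiv:1701.08428 — 2 statements merged into one kernel-verified Lean document; each statement's English description precedes it below -/
import Mathlib

section
/- Let p, q ∈ L¹([0,π];ℝ), let Ω(x) be the 2×2 matrix with rows (p(x), q(x)) and (q(x), −p(x)), let α ∈ (−π/2, π/2], t ∈ ℝ, μ ∈ ℝ. Let h : [0,π] → ℝ² be absolutely continuous with B h'(x) + Ω(x) h(x) = μ h(x) a.e., h₁(0)cos α + h₂(0)sin α = 0, and ∫₀^π |h(s)|² ds = 1. Define θ(x) = 1 + (e^t − 1)∫₀^x |h(s)|² ds and Ω_t(x) = Ω(x) + ((e^t − 1)/θ(x))·(B h(x)h(x)* − h(x)h(x)* B). Let λ ∈ ℝ and let y : [0,π] → ℝ² be absolutely continuous with B y'(x) + Ω(x) y(x) = λ y(x) a.e. and y₁(0)cos α + y₂(0)sin α = 0. Then the function ỹ(x) = y(x) − ((e^t − 1) ∫₀^x h(s)*y(s) ds / θ(x)) · h(x) is absolutely continuous and satisfies B ỹ'(x) + Ω_t(x) ỹ(x) = λ ỹ(x) a.e. on [0,π]; moreover ỹ(0) = y(0), and if in addition y₁(π) = 0 and h₁(π) = 0, then ỹ₁(π)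 = 0. -/
/-!
Write `ỹ = y - F • h` with `F = (e^t - 1) G / θ` and `G(x) = ∫₀ˣ h*y`. The boundary conditions
at `0` make `h(0)` and `y(0)` parallel, so the Lagrange identity for the symmetric system gives
the Wronskian `h₁ y₂ - h₂ y₁ = (λ - μ) G`. Differentiating `ỹ` and using both equations, the
defect `B ỹ' + Ω ỹ - λ ỹ` equals `-F' B h + (λ - μ) F h`. This is exactly what the rank-two
correction `((e^t - 1) / θ) (B h h* - h h* B) ỹ = ((e^t - 1) / θ) ((h*ỹ) B h - (h* B ỹ) h)`
removes: its first coefficient is `F'`, and `h* B ỹ = h* B y` is the Wronskian.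
-/

open MeasureTheory Real Set

noncomputable section

/-- The matrix `B` of the canonical Dirac system. -/
def Bmat : Matrix (Fin 2) (Fin 2) ℝ := !![0, 1; -1, 0]

/-- The canonical potential matrix `Ω(x)` built from `p` and `q`. -/
def Omat (p q : ℝ → ℝ) (x : ℝ) : Matrix (Fin 2) (Fin 2) ℝ := !![p x, q x; q x, -(p x)]

/-- `θ(x) = 1 + (e^t - 1) ∫₀ˣ |h(s)|² ds`. -/
def theta (t : ℝ) (h : ℝ → Fin 2 → ℝ) (x : ℝ) : ℝ :=
  1 + (Real.exp t - 1) * ∫ s in (0:ℝ)..x, ((h s 0) ^ 2 + (h s 1) ^ 2)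

/-- The transformed potential
`Ω_t(x) = Ω(x) + ((e^t - 1)/θ(x)) (B h(x)h(x)* - h(x)h(x)* B)`. -/
def OmatT (p q : ℝ → ℝ) (t : ℝ) (h : ℝ → Fin 2 → ℝ) (x : ℝ) : Matrix (Fin 2) (Fin 2) ℝ :=
  Omat p q x + ((Real.exp t - 1) / theta t h x) •
    (Bmat * Matrix.vecMulVec (h x) (h x) - Matrix.vecMulVec (h x) (h x) * Bmat)

/-- `ỹ(x) = y(x) - ((e^t - 1) ∫₀ˣ h(s)*y(s) ds / θ(x)) h(x)`. -/
def ytil (t : ℝ) (h y : ℝ → Fin 2 → ℝ) (x : ℝ) : Fin 2 → ℝ :=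
  y x - ((Real.exp t - 1) * (∫ s in (0:ℝ)..x, (h s 0 * y s 0 + h s 1 * y s 1)) /
    theta t h x) • h x

open Filter Interval Matrix

theorem AbsolutelyContinuousOnInterval.congr {f g : ℝ → ℝ} {a b : ℝ}
    (hf : AbsolutelyContinuousOnInterval f a b) (hfg : EqOn f g (uIcc a b)) :
    AbsolutelyContinuousOnInterval g a b := by
  refine hf.congr' ?_
  filter_upwards [mem_inf_of_right (mem_principal_self _)] with E hE
  exact Finset.sum_congr rfl fun i hi => by rw [hfg (hE.1 i hi).1, hfg (hE.1 i hi).2]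

def AbsolutelyContinuousWithDerivOn (f f' : ℝ → ℝ) (a b : ℝ) : Prop :=
  AbsolutelyContinuousOnInterval f a b ∧ ∀ᵐ x, x ∈ uIcc a b → HasDerivAt f (f' x) x

namespace AbsolutelyContinuousWithDerivOn

variable {f g f' g' : ℝ → ℝ} {a b : ℝ}

theorem of_eq_add_integral (hf' : IntervalIntegrable f' volume a b)
    (hf : ∀ x ∈ uIcc a b, f x = f a + ∫ s in a..x, f' s) :
    AbsolutelyContinuousWithDerivOn f f' a b := by
  refine ⟨?_, ?_⟩
  · have hconst : AbsolutelyContinuousOnInterval (fun _ => f a) a b :=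
      (LipschitzWith.const (f a)).lipschitzOnWith.absolutelyContinuousOnInterval
    exact (hconst.add (hf'.absolutelyContinuousOnInterval_intervalIntegral left_mem_uIcc)).congr
      fun x hx => (hf x hx).symm
  · have hne_a : ∀ᵐ x : ℝ, x ≠ a := by simp [ae_iff, measure_singleton]
    have hne_b : ∀ᵐ x : ℝ, x ≠ b := by simp [ae_iff, measure_singleton]
    filter_upwards [hf'.ae_hasDerivAt_integral, hne_a, hne_b] with x hx hxa hxb hxab
    have hxo : x ∈ Ioo (min a b) (max a b) := by
      simp only [uIcc, mem_Icc, mem_Ioo] at hxab ⊢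
      grind
    refine ((hx hxab a left_mem_uIcc).const_add (f a)).congr_of_eventuallyEq ?_
    filter_upwards [Ioo_mem_nhds hxo.1 hxo.2] with u hu
    exact hf u (Ioo_subset_Icc_self hu)

theorem of_hasDerivAt (hab : a ≤ b) (hf : ContinuousOn f (Icc a b))
    (hf' : ∀ x ∈ Ioo a b, HasDerivAt f (f' x) x) (hint : IntervalIntegrable f' volume a b) :
    AbsolutelyContinuousWithDerivOn f f' a b := by
  refine of_eq_add_integral hint fun x hx => ?_
  rw [uIcc_of_le hab] at hx
  rw [intervalIntegral.integral_eq_sub_of_hasDerivAt_of_le hx.1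
    (hf.mono (Icc_subset_Icc le_rfl hx.2)) (fun y hy => hf' y ⟨hy.1, hy.2.trans_le hx.2⟩)
    (hint.mono_set (by rw [uIcc_of_le hab, uIcc_of_le hx.1]; exact Icc_subset_Icc le_rfl hx.2))]
  ring

theorem mono (hf : AbsolutelyContinuousWithDerivOn f f' a b) {c d : ℝ}
    (hcd : uIcc c d ⊆ uIcc a b) : AbsolutelyContinuousWithDerivOn f f' c d :=
  ⟨hf.1.mono hcd, hf.2.mono fun _ hx hxcd => hx (hcd hxcd)⟩

theorem sub (hf : AbsolutelyContinuousWithDerivOn f f' a b)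
    (hg : AbsolutelyContinuousWithDerivOn g g' a b) :
    AbsolutelyContinuousWithDerivOn (fun x => f x - g x) (fun x => f' x - g' x) a b :=
  ⟨hf.1.sub hg.1, by filter_upwards [hf.2, hg.2] with x hfx hgx hx using (hfx hx).sub (hgx hx)⟩

theorem mul (hf : AbsolutelyContinuousWithDerivOn f f' a b)
    (hg : AbsolutelyContinuousWithDerivOn g g' a b) :
    AbsolutelyContinuousWithDerivOn (fun x => f x * g x) (fun x => f' x * g x + f x * g' x) a b :=
  ⟨hf.1.mul hg.1, by filter_upwards [hf.2, hg.2] with x hfx hgx hx using (hfx hx).mul (hgx hx)⟩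

theorem congr_deriv (hf : AbsolutelyContinuousWithDerivOn f f' a b)
    (h : ∀ᵐ x, x ∈ uIcc a b → f' x = g' x) : AbsolutelyContinuousWithDerivOn f g' a b :=
  ⟨hf.1, by filter_upwards [hf.2, h] with x hfx hx hmem using hx hmem ▸ hfx hmem⟩

theorem continuousOn (hf : AbsolutelyContinuousWithDerivOn f f' a b) :
    ContinuousOn f (uIcc a b) :=
  hf.1.continuousOn

theorem deriv_ae_eq (hf : AbsolutelyContinuousWithDerivOn f f' a b) :
    ∀ᵐ x, x ∈ Ι a b → deriv f x = f' x := by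
  filter_upwards [hf.2] with x hx hmem using (hx (uIoc_subset_uIcc hmem)).deriv

theorem intervalIntegrable (hf : AbsolutelyContinuousWithDerivOn f f' a b) :
    IntervalIntegrable f' volume a b :=
  hf.1.intervalIntegrable_deriv.congr_ae <|
    (ae_restrict_iff' measurableSet_uIoc).mpr hf.deriv_ae_eq

theorem eq_add_integral (hf : AbsolutelyContinuousWithDerivOn f f' a b) :
    f b = f a + ∫ x in a..b, f' x := by
  rw [← intervalIntegral.integral_congr_ae hf.deriv_ae_eq, hf.1.integral_deriv_eq_sub]
  ring

theorem eq_add_integral_of_mem (hf : AbsolutelyContinuousWithDerivOn f f' a b) {x : ℝ}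
    (hx : x ∈ uIcc a b) : f x = f a + ∫ s in a..x, f' s :=
  (hf.mono (uIcc_subset_uIcc left_mem_uIcc hx)).eq_add_integral

theorem apply_of_eq_add_integral {ι : Type*} [Fintype ι] {v v' : ℝ → ι → ℝ} (hab : a ≤ b)
    (hv' : IntegrableOn v' (Icc a b))
    (hv : ∀ x ∈ Icc a b, ∀ i, v x i = v a i + ∫ s in a..x, v' s i) (i : ι) :
    AbsolutelyContinuousWithDerivOn (v · i) (v' · i) a b :=
  of_eq_add_integral
    ((intervalIntegrable_iff_integrableOn_Icc_of_le hab).mpr (integrable_pi_iff.mp hv' i))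
    (uIcc_of_le hab ▸ fun x hx => hv x hx i)

end AbsolutelyContinuousWithDerivOn

theorem hasDerivAt_integral_of_continuousOn {g : ℝ → ℝ} {a b x : ℝ}
    (hg : ContinuousOn g (Icc a b)) (hx : x ∈ Ioo a b) :
    HasDerivAt (fun u => ∫ s in a..u, g s) (g x) x :=
  intervalIntegral.integral_hasDerivAt_right
    ((hg.mono (Icc_subset_Icc le_rfl hx.2.le)).intervalIntegrable_of_Icc hx.1.le)
    (hg.mono Ioo_subset_Icc_self |>.stronglyMeasurableAtFilter isOpen_Ioo x hx)
    (hg.continuousAt (Icc_mem_nhds hx.1 hx.2))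

theorem continuousOn_integral_of_continuousOn {g : ℝ → ℝ} {a b : ℝ} (hab : a ≤ b)
    (hg : ContinuousOn g (Icc a b)) :
    ContinuousOn (fun u => ∫ s in a..u, g s) (Icc a b) := by
  have := intervalIntegral.continuousOn_primitive_interval (μ := volume)
    (hg.integrableOn_Icc.mono_set (uIcc_of_le hab).subset)
  rwa [uIcc_of_le hab] at this

theorem commutator_vecMulVec_mulVec {n R : Type*} [Fintype n] [CommRing R]
    (A : Matrix n n R) (h v : n → R) :
    (A * vecMulVec h h - vecMulVec h h * A) *ᵥ v =
      (h ⬝ᵥ v) • (A *ᵥ h) - (h ⬝ᵥ (A *ᵥ v)) • h := by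
  rw [sub_mulVec, ← mulVec_mulVec, ← mulVec_mulVec, vecMulVec_mulVec, vecMulVec_mulVec,
    op_smul_eq_smul, op_smul_eq_smul, mulVec_smul]

theorem dotProduct_Bmat_mulVec (u v : Fin 2 → ℝ) : u ⬝ᵥ (Bmat *ᵥ v) = u 0 * v 1 - u 1 * v 0 := by
  simp [Bmat, vecHead, vecTail]
  ring

theorem Bmat_mulVec_add_mulVec_eq_smul_iff (Ω : Matrix (Fin 2) (Fin 2) ℝ) (l : ℝ)
    (u u' : Fin 2 → ℝ) :
    Bmat *ᵥ u' + Ω *ᵥ u = l • u ↔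
      u' 1 + (Ω 0 0 * u 0 + Ω 0 1 * u 1) = l * u 0 ∧
        -u' 0 + (Ω 1 0 * u 0 + Ω 1 1 * u 1) = l * u 1 := by
  simp [funext_iff, Fin.forall_fin_two, Bmat, dotProduct, Fin.sum_univ_two]

theorem Omat_isSymm (p q : ℝ → ℝ) (x : ℝ) : (Omat p q x).IsSymm :=
  IsSymm.ext fun i j => by fin_cases i <;> fin_cases j <;> rfl

theorem dirac_lagrange_identity {Ω : Matrix (Fin 2) (Fin 2) ℝ} (hΩ : Ω.IsSymm) {μ l : ℝ}
    {u u' v v' : Fin 2 → ℝ} (hu : Bmat *ᵥ u' + Ω *ᵥ u = μ • u)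
    (hv : Bmat *ᵥ v' + Ω *ᵥ v = l • v) :
    u' 0 * v 1 + u 0 * v' 1 - (u' 1 * v 0 + u 1 * v' 0) = (l - μ) * (u 0 * v 0 + u 1 * v 1) := by
  rw [Bmat_mulVec_add_mulVec_eq_smul_iff] at hu hv
  linear_combination (-v 1) * hu.2 - v 0 * hu.1 + u 0 * hv.1 + u 1 * hv.2 +
    (u 0 * v 1 - u 1 * v 0) * hΩ.apply 0 1

theorem cross_eq_zero_of_boundary {α : ℝ} {u v : Fin 2 → ℝ}
    (hu : u 0 * cos α + u 1 * sin α = 0) (hv : v 0 * cos α + v 1 * sin α = 0) :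
    u 0 * v 1 - u 1 * v 0 = 0 := by
  linear_combination (sin α * u 0 - cos α * u 1) * hv + (cos α * v 1 - sin α * v 0) * hu
    - (u 0 * v 1 - u 1 * v 0) * sin_sq_add_cos_sq α

theorem darboux_step (Ω : Matrix (Fin 2) (Fin 2) ℝ) {μ l k F F' : ℝ} {h h' y y' : Fin 2 → ℝ}
    (hh : Bmat *ᵥ h' + Ω *ᵥ h = μ • h) (hy : Bmat *ᵥ y' + Ω *ᵥ y = l • y)
    (hW : (l - μ) * F = k * (h ⬝ᵥ (Bmat *ᵥ y)))
    (hF' : F' = k * (h ⬝ᵥ y - F * (h ⬝ᵥ h))) :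
    Bmat *ᵥ (y' - (F' • h + F • h')) +
        (Ω + k • (Bmat * vecMulVec h h - vecMulVec h h * Bmat)) *ᵥ (y - F • h) =
      l • (y - F • h) := by
  have hBh : h ⬝ᵥ (Bmat *ᵥ h) = 0 := by rw [dotProduct_Bmat_mulVec]; ring
  simp only [add_mulVec, smul_mulVec, commutator_vecMulVec_mulVec, mulVec_sub, mulVec_add,
    mulVec_smul, hBh]
  linear_combination (norm := module) hy - F • hh - hF' • (Bmat *ᵥ h) + hW • h

theorem dirac_wronskian_eq_add_integral {Ω : ℝ → Matrix (Fin 2) (Fin 2) ℝ}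
    (hΩ : ∀ x, (Ω x).IsSymm) {μ l a b : ℝ} {h h' y y' : ℝ → Fin 2 → ℝ}
    (hh : ∀ i, AbsolutelyContinuousWithDerivOn (h · i) (h' · i) a b)
    (hy : ∀ i, AbsolutelyContinuousWithDerivOn (y · i) (y' · i) a b)
    (hhode : ∀ᵐ x, x ∈ uIcc a b → Bmat *ᵥ h' x + Ω x *ᵥ h x = μ • h x)
    (hyode : ∀ᵐ x, x ∈ uIcc a b → Bmat *ᵥ y' x + Ω x *ᵥ y x = l • y x) {x : ℝ}
    (hx : x ∈ uIcc a b) :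
    h x 0 * y x 1 - h x 1 * y x 0 =
      h a 0 * y a 1 - h a 1 * y a 0 +
        (l - μ) * ∫ s in a..x, (h s 0 * y s 0 + h s 1 * y s 1) := by
  have hW := ((hh 0).mul (hy 1)).sub ((hh 1).mul (hy 0))
  rw [← intervalIntegral.integral_const_mul]
  refine (hW.congr_deriv ?_).eq_add_integral_of_mem hx
  filter_upwards [hhode, hyode] with s hhs hys hs
  exact dirac_lagrange_identity (hΩ s) (hhs hs) (hys hs)

theorem one_add_exp_sub_one_mul_pos (t : ℝ) {N : ℝ} (h0 : 0 ≤ N) (h1 : N ≤ 1) :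
    0 < 1 + (exp t - 1) * N := by
  nlinarith [exp_pos t, mul_nonneg (exp_pos t).le h0]

theorem theta_pos (t : ℝ) {h : ℝ → Fin 2 → ℝ} {b x : ℝ}
    (hn : IntervalIntegrable (fun s => h s 0 ^ 2 + h s 1 ^ 2) volume 0 b)
    (hnorm : ∫ s in (0:ℝ)..b, (h s 0 ^ 2 + h s 1 ^ 2) = 1) (hx : x ∈ Icc 0 b) :
    0 < theta t h x := by
  refine one_add_exp_sub_one_mul_pos t
    (intervalIntegral.integral_nonneg hx.1 fun _ _ => by positivity) ?_
  rw [← hnorm]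
  exact intervalIntegral.integral_mono_interval le_rfl hx.1 hx.2
    (ae_of_all _ fun _ => by positivity) hn

-- `ytil t h y = y - darbouxCoeff t h y • h` holds definitionally.
def darbouxCoeff (t : ℝ) (h y : ℝ → Fin 2 → ℝ) (x : ℝ) : ℝ :=
  (exp t - 1) * (∫ s in (0:ℝ)..x, (h s 0 * y s 0 + h s 1 * y s 1)) / theta t h x

def darbouxCoeffDeriv (t : ℝ) (h y : ℝ → Fin 2 → ℝ) (x : ℝ) : ℝ :=
  (exp t - 1) / theta t h x *
    (h x 0 * y x 0 + h x 1 * y x 1 - darbouxCoeff t h y x * (h x 0 ^ 2 + h x 1 ^ 2))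

def ytilDeriv (t : ℝ) (h h' y y' : ℝ → Fin 2 → ℝ) (x : ℝ) : Fin 2 → ℝ :=
  y' x - (darbouxCoeffDeriv t h y x • h x + darbouxCoeff t h y x • h' x)

theorem darbouxCoeff_absolutelyContinuousWithDerivOn (t : ℝ) {h y : ℝ → Fin 2 → ℝ} {b : ℝ}
    (hb : 0 ≤ b) (hh : ContinuousOn h (Icc 0 b)) (hy : ContinuousOn y (Icc 0 b))
    (hnorm : ∫ s in (0:ℝ)..b, (h s 0 ^ 2 + h s 1 ^ 2) = 1) :
    AbsolutelyContinuousWithDerivOn (darbouxCoeff t h y) (darbouxCoeffDeriv t h y) 0 b := by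
  have hc : ∀ i, ContinuousOn (h · i) (Icc 0 b) := continuousOn_pi.mp hh
  have hyc : ∀ i, ContinuousOn (y · i) (Icc 0 b) := continuousOn_pi.mp hy
  have hg : ContinuousOn (fun s => h s 0 * y s 0 + h s 1 * y s 1) (Icc 0 b) :=
    ((hc 0).mul (hyc 0)).add ((hc 1).mul (hyc 1))
  have hn : ContinuousOn (fun s => h s 0 ^ 2 + h s 1 ^ 2) (Icc 0 b) :=
    ((hc 0).pow 2).add ((hc 1).pow 2)
  have hθ : ∀ x ∈ Icc 0 b, theta t h x ≠ 0 := fun x hx =>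
    (theta_pos t (hn.intervalIntegrable_of_Icc hb) hnorm hx).ne'
  have hθc : ContinuousOn (theta t h) (Icc 0 b) :=
    continuousOn_const.add (continuousOn_const.mul (continuousOn_integral_of_continuousOn hb hn))
  have hF : ContinuousOn (darbouxCoeff t h y) (Icc 0 b) :=
    (continuousOn_const.mul (continuousOn_integral_of_continuousOn hb hg)).div hθc hθ
  refine .of_hasDerivAt hb hF (fun x hx => ?_) ?_
  · have hθx := hθ x (Ioo_subset_Icc_self hx)
    refine (((hasDerivAt_integral_of_continuousOn hg hx).const_mul (exp t - 1)).div
      (((hasDerivAt_integral_of_continuousOn hn hx).const_mul (exp t - 1)).const_add 1)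
        hθx).congr_deriv ?_
    simp only [darbouxCoeffDeriv, darbouxCoeff, theta] at hθx ⊢
    field_simp
  · exact ((continuousOn_const.div hθc hθ).mul (hg.sub (hF.mul hn))).intervalIntegrable_of_Icc hb

theorem stmt_2_general (p q : ℝ → ℝ)
    (α : ℝ)
    (t mu lam : ℝ)
    (h h' : ℝ → Fin 2 → ℝ)
    -- h is absolutely continuous on [0,π] with integrable derivative h':
    (hh'int : IntegrableOn h' (Icc (0:ℝ) π))
    (hhAC : ∀ x ∈ Icc (0:ℝ) π, ∀ i : Fin 2, h x i = h 0 i + ∫ s in (0:ℝ)..x, h' s i)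
    -- B h' + Ω h = μ h a.e. on [0,π]:
    (hhode : ∀ᵐ x ∂(volume.restrict (Icc (0:ℝ) π)),
      Bmat.mulVec (h' x) + (Omat p q x).mulVec (h x) = mu • h x)
    -- boundary condition at 0 and normalization:
    (hhbc : h 0 0 * Real.cos α + h 0 1 * Real.sin α = 0)
    (hhnorm : (∫ s in (0:ℝ)..π, ((h s 0) ^ 2 + (h s 1) ^ 2)) = 1)
    (y y' : ℝ → Fin 2 → ℝ)
    -- y is absolutely continuous on [0,π] with integrable derivative y':
    (hy'int : IntegrableOn y' (Icc (0:ℝ) π))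
    (hyAC : ∀ x ∈ Icc (0:ℝ) π, ∀ i : Fin 2, y x i = y 0 i + ∫ s in (0:ℝ)..x, y' s i)
    -- B y' + Ω y = λ y a.e. on [0,π]:
    (hyode : ∀ᵐ x ∂(volume.restrict (Icc (0:ℝ) π)),
      Bmat.mulVec (y' x) + (Omat p q x).mulVec (y x) = lam • y x)
    (hybc : y 0 0 * Real.cos α + y 0 1 * Real.sin α = 0) :
    -- ỹ is absolutely continuous and solves B ỹ' + Ω_t ỹ = λ ỹ a.e. on [0,π]:
    (∃ z : ℝ → Fin 2 → ℝ, IntegrableOn z (Icc (0:ℝ) π) ∧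
      (∀ x ∈ Icc (0:ℝ) π, ∀ i : Fin 2,
        ytil t h y x i = ytil t h y 0 i + ∫ s in (0:ℝ)..x, z s i) ∧
      (∀ᵐ x ∂(volume.restrict (Icc (0:ℝ) π)),
        Bmat.mulVec (z x) + (OmatT p q t h x).mulVec (ytil t h y x) = lam • ytil t h y x)) ∧
    -- ỹ(0) = y(0):
    ytil t h y 0 = y 0 ∧
    -- preservation of the boundary condition at π:
    (y π 0 = 0 → h π 0 = 0 → ytil t h y π 0 = 0) := by
  have hπ : uIcc 0 π = Icc 0 π := uIcc_of_le pi_pos.le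
  have hH := AbsolutelyContinuousWithDerivOn.apply_of_eq_add_integral pi_pos.le hh'int hhAC
  have hY := AbsolutelyContinuousWithDerivOn.apply_of_eq_add_integral pi_pos.le hy'int hyAC
  have hode : ∀ {l : ℝ} {u u' : ℝ → Fin 2 → ℝ},
      (∀ᵐ x ∂(volume.restrict (Icc (0:ℝ) π)), Bmat *ᵥ u' x + Omat p q x *ᵥ u x = l • u x) →
        ∀ᵐ x, x ∈ uIcc 0 π → Bmat *ᵥ u' x + Omat p q x *ᵥ u x = l • u x :=
    fun hu => hπ ▸ (ae_restrict_iff' measurableSet_Icc).mp hu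
  have hcont : ∀ {u u' : ℝ → Fin 2 → ℝ},
      (∀ i, AbsolutelyContinuousWithDerivOn (u · i) (u' · i) 0 π) → ContinuousOn u (Icc 0 π) :=
    fun hu => continuousOn_pi.mpr fun i => hπ ▸ (hu i).continuousOn
  have hF := darbouxCoeff_absolutelyContinuousWithDerivOn t pi_pos.le (hcont hH) (hcont hY) hhnorm
  have hW : ∀ x ∈ Icc 0 π, (lam - mu) * darbouxCoeff t h y x =
      (exp t - 1) / theta t h x * (h x ⬝ᵥ (Bmat *ᵥ y x)) := fun x hx => by
    rw [dotProduct_Bmat_mulVec, dirac_wronskian_eq_add_integral (Omat_isSymm p q) hH hY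
      (hode hhode) (hode hyode) (hπ ▸ hx), cross_eq_zero_of_boundary hhbc hybc, darbouxCoeff]
    ring
  have hYt : ∀ i, AbsolutelyContinuousWithDerivOn (fun x => ytil t h y x i)
      (fun x => ytilDeriv t h h' y y' x i) 0 π := fun i => (hY i).sub (hF.mul (hH i))
  refine ⟨⟨ytilDeriv t h h' y y', ?_, fun x hx i => (hYt i).eq_add_integral_of_mem (hπ ▸ hx), ?_⟩,
    by simp [ytil], fun hyπ hhπ => by simp [ytil, hyπ, hhπ]⟩
  · exact integrable_pi_iff.mpr fun i =>
      (intervalIntegrable_iff_integrableOn_Icc_of_le pi_pos.le).mp (hYt i).intervalIntegrable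
  · filter_upwards [hhode, hyode, ae_restrict_mem measurableSet_Icc] with x hhx hyx hx
    exact darboux_step (Omat p q x) hhx hyx (hW x hx)
      (by simp only [darbouxCoeffDeriv, vec2_dotProduct, sq])

/-- Analytic core of Theorem 1.2: the Darboux-type transformation built from a
normalized eigenfunction `h` of `L(Ω,α)` maps solutions of the `Ω`-system satisfying
the boundary condition at `0` to solutions of the transformed `Ω_t`-system with the
same spectral parameter, preserving both boundary conditions. -/
theorem stmt_2 (p q : ℝ → ℝ)
    (hp : IntegrableOn p (Icc (0:ℝ) π)) (hq : IntegrableOn q (Icc (0:ℝ) π))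
    (α : ℝ) (hα : α ∈ Ioc (-(π / 2)) (π / 2))
    (t mu lam : ℝ)
    (h h' : ℝ → Fin 2 → ℝ)
    -- h is absolutely continuous on [0,π] with integrable derivative h':
    (hh'int : IntegrableOn h' (Icc (0:ℝ) π))
    (hhAC : ∀ x ∈ Icc (0:ℝ) π, ∀ i : Fin 2, h x i = h 0 i + ∫ s in (0:ℝ)..x, h' s i)
    -- B h' + Ω h = μ h a.e. on [0,π]:
    (hhode : ∀ᵐ x ∂(volume.restrict (Icc (0:ℝ) π)),
      Bmat.mulVec (h' x) + (Omat p q x).mulVec (h x) = mu • h x)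
    -- boundary condition at 0 and normalization:
    (hhbc : h 0 0 * Real.cos α + h 0 1 * Real.sin α = 0)
    (hhnorm : (∫ s in (0:ℝ)..π, ((h s 0) ^ 2 + (h s 1) ^ 2)) = 1)
    (y y' : ℝ → Fin 2 → ℝ)
    -- y is absolutely continuous on [0,π] with integrable derivative y':
    (hy'int : IntegrableOn y' (Icc (0:ℝ) π))
    (hyAC : ∀ x ∈ Icc (0:ℝ) π, ∀ i : Fin 2, y x i = y 0 i + ∫ s in (0:ℝ)..x, y' s i)
    -- B y' + Ω y = λ y a.e. on [0,π]:
    (hyode : ∀ᵐ x ∂(volume.restrict (Icc (0:ℝ) π)),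
      Bmat.mulVec (y' x) + (Omat p q x).mulVec (y x) = lam • y x)
    (hybc : y 0 0 * Real.cos α + y 0 1 * Real.sin α = 0) :
    -- ỹ is absolutely continuous and solves B ỹ' + Ω_t ỹ = λ ỹ a.e. on [0,π]:
    (∃ z : ℝ → Fin 2 → ℝ, IntegrableOn z (Icc (0:ℝ) π) ∧
      (∀ x ∈ Icc (0:ℝ) π, ∀ i : Fin 2,
        ytil t h y x i = ytil t h y 0 i + ∫ s in (0:ℝ)..x, z s i) ∧
      (∀ᵐ x ∂(volume.restrict (Icc (0:ℝ) π)),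
        Bmat.mulVec (z x) + (OmatT p q t h x).mulVec (ytil t h y x) = lam • ytil t h y x)) ∧
    -- ỹ(0) = y(0):
    ytil t h y 0 = y 0 ∧
    -- preservation of the boundary condition at π:
    (y π 0 = 0 → h π 0 = 0 → ytil t h y π 0 = 0) :=
  stmt_2_general p q α t mu lam h h' hh'int hhAC hhode hhbc hhnorm y y' hy'int hyAC hyode hybc
end
end

section
/- Let t ∈ ℝ and let h, g : [0,π] → ℝ² be continuous functions with ∫₀^π |h(s)|² ds = 1, ∫₀^π |g(s)|² ds = 1, and ∫₀^π h(s)*g(s) ds = 0. Define θ(x) = 1 + (e^t − 1)∫₀^x |h(s)|² ds. Then ∫₀^π | g(x) − ((e^t − 1) ∫₀^x h(s)*g(s) ds / θ(x)) · h(x) |² dx = 1. -/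
open MeasureTheory Real Set

noncomputable section

private lemma key (t : ℝ) (h g : ℝ → Fin 2 → ℝ)
    (hh : Continuous h) (hg : Continuous g)
    (hhn : (∫ s in (0:ℝ)..π, ((h s 0) ^ 2 + (h s 1) ^ 2)) = 1)
    (horth : (∫ s in (0:ℝ)..π, (h s 0 * g s 0 + h s 1 * g s 1)) = 0) :
    (∫ x in (0:ℝ)..π,
      ((g x 0 - ((Real.exp t - 1) * (∫ s in (0:ℝ)..x, (h s 0 * g s 0 + h s 1 * g s 1)) /
          theta t h x) * h x 0) ^ 2 +
       (g x 1 - ((Real.exp t - 1) * (∫ s in (0:ℝ)..x, (h s 0 * g s 0 + h s 1 * g s 1)) /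
          theta t h x) * h x 1) ^ 2)) =
    ∫ x in (0:ℝ)..π, ((g x 0) ^ 2 + (g x 1) ^ 2) := by
  have h0 : Continuous fun s => h s 0 := (continuous_apply (0 : Fin 2)).comp hh
  have h1 : Continuous fun s => h s 1 := (continuous_apply (1 : Fin 2)).comp hh
  have g0 : Continuous fun s => g s 0 := (continuous_apply (0 : Fin 2)).comp hg
  have g1 : Continuous fun s => g s 1 := (continuous_apply (1 : Fin 2)).comp hg
  set c : ℝ := Real.exp t - 1 with hc
  set nh : ℝ → ℝ := fun s => (h s 0) ^ 2 + (h s 1) ^ 2 with hnhdef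
  set dt : ℝ → ℝ := fun s => h s 0 * g s 0 + h s 1 * g s 1 with hdtdef
  have hnh : Continuous nh := (h0.pow 2).add (h1.pow 2)
  have hdt : Continuous dt := (h0.mul g0).add (h1.mul g1)
  set G : ℝ → ℝ := fun x => ∫ s in (0:ℝ)..x, dt s with hGdef
  set H : ℝ → ℝ := fun x => ∫ s in (0:ℝ)..x, nh s with hHdef
  have hGd : ∀ x : ℝ, HasDerivAt G (dt x) x := fun x =>
    intervalIntegral.integral_hasDerivAt_right (hdt.intervalIntegrable _ _)
      (hdt.stronglyMeasurableAtFilter _ _) hdt.continuousAt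
  have hHd : ∀ x : ℝ, HasDerivAt H (nh x) x := fun x =>
    intervalIntegral.integral_hasDerivAt_right (hnh.intervalIntegrable _ _)
      (hnh.stronglyMeasurableAtFilter _ _) hnh.continuousAt
  have hGc : Continuous G := continuous_iff_continuousAt.mpr fun x => (hGd x).continuousAt
  have hHc : Continuous H := continuous_iff_continuousAt.mpr fun x => (hHd x).continuousAt
  have hH0 : ∀ x ∈ Icc (0:ℝ) π, 0 ≤ H x := fun x hx =>
    intervalIntegral.integral_nonneg hx.1 (fun s _ => by positivity)
  have hH1 : ∀ x ∈ Icc (0:ℝ) π, H x ≤ 1 := by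
    intro x hx
    have hadd : H x + ∫ s in x..π, nh s = 1 := by
      simp only [hHdef]
      rw [intervalIntegral.integral_add_adjacent_intervals (hnh.intervalIntegrable _ _)
        (hnh.intervalIntegrable _ _)]
      exact hhn
    have h2 : 0 ≤ ∫ s in x..π, nh s :=
      intervalIntegral.integral_nonneg hx.2 (fun s _ => by positivity)
    linarith
  have hθ : ∀ x ∈ Icc (0:ℝ) π, 0 < 1 + c * H x := by
    intro x hx
    have e1 := hH0 x hx
    have e2 := hH1 x hx
    have e3 := Real.exp_pos t
    nlinarith [mul_nonneg e1 e3.le, mul_nonneg e3.le (sub_nonneg.2 e2)]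
  have hθeq : ∀ x : ℝ, theta t h x = 1 + c * H x := fun x => rfl
  set F : ℝ → ℝ := fun x => c * (G x) ^ 2 / (1 + c * H x) with hFdef
  set φ : ℝ → ℝ := fun x =>
    ((c * (2 * G x * dt x)) * (1 + c * H x) - (c * (G x) ^ 2) * (c * nh x)) /
      (1 + c * H x) ^ 2 with hφdef
  have hFd : ∀ x ∈ Icc (0:ℝ) π, HasDerivAt F (φ x) x := by
    intro x hx
    have hnum : HasDerivAt (fun y => c * (G y) ^ 2) (c * (2 * G x * dt x)) x := by
      have := (((hGd x).pow 2).const_mul c : HasDerivAt (fun y => c * (G y) ^ 2) _ x)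
      refine this.congr_deriv ?_
      push_cast
      ring
    have hden : HasDerivAt (fun y => 1 + c * H y) (c * nh x) x :=
      ((hHd x).const_mul c).const_add 1
    exact hnum.div hden (ne_of_gt (hθ x hx))
  have hφcont : ContinuousOn φ (Icc (0:ℝ) π) := by
    apply ContinuousOn.div
    · exact Continuous.continuousOn (by fun_prop)
    · exact Continuous.continuousOn (by fun_prop)
    · exact fun x hx => pow_ne_zero 2 (ne_of_gt (hθ x hx))
  have hφint : IntervalIntegrable φ volume 0 π := by
    apply ContinuousOn.intervalIntegrable
    rwa [uIcc_of_le Real.pi_pos.le]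
  have hFTC : (∫ x in (0:ℝ)..π, φ x) = F π - F 0 :=
    intervalIntegral.integral_eq_sub_of_hasDerivAt
      (fun x hx => hFd x (by rwa [uIcc_of_le Real.pi_pos.le] at hx)) hφint
  have hG0 : G 0 = 0 := by simp [hGdef]
  have hGπ : G π = 0 := by simp only [hGdef]; exact horth
  have hF0 : F 0 = 0 := by simp [hFdef, hG0]
  have hFπ : F π = 0 := by simp [hFdef, hGπ]
  have hng : Continuous fun x => (g x 0) ^ 2 + (g x 1) ^ 2 := (g0.pow 2).add (g1.pow 2)
  calc (∫ x in (0:ℝ)..π,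
      ((g x 0 - c * (∫ s in (0:ℝ)..x, dt s) / theta t h x * h x 0) ^ 2 +
       (g x 1 - c * (∫ s in (0:ℝ)..x, dt s) / theta t h x * h x 1) ^ 2))
      = ∫ x in (0:ℝ)..π, (((g x 0) ^ 2 + (g x 1) ^ 2) - φ x) := by
        apply intervalIntegral.integral_congr
        intro x hx
        rw [uIcc_of_le Real.pi_pos.le] at hx
        have hne : (1 + c * H x) ≠ 0 := ne_of_gt (hθ x hx)
        have hGx : (∫ s in (0:ℝ)..x, dt s) = G x := rfl
        have hdtx : dt x = h x 0 * g x 0 + h x 1 * g x 1 := rfl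
        have hnhx : nh x = (h x 0) ^ 2 + (h x 1) ^ 2 := rfl
        simp only [hGx, hθeq x, hφdef, hdtx, hnhx]
        field_simp
        ring
    _ = (∫ x in (0:ℝ)..π, ((g x 0) ^ 2 + (g x 1) ^ 2)) - ∫ x in (0:ℝ)..π, φ x :=
        intervalIntegral.integral_sub (hng.intervalIntegrable _ _) hφint
    _ = ∫ x in (0:ℝ)..π, ((g x 0) ^ 2 + (g x 1) ^ 2) := by
        rw [hFTC, hF0, hFπ]; ring

/-- Norming-constant part of Theorem 1.2 for indices `n ≠ m`: the Darboux-type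
transform of a normalized function `g` orthogonal to the normalized function `h`
again has `L²([0,π];ℝ²)` norm equal to `1`. -/
theorem stmt_4 (t : ℝ) (h g : ℝ → Fin 2 → ℝ)
    (hh : ContinuousOn h (Icc (0:ℝ) π)) (hg : ContinuousOn g (Icc (0:ℝ) π))
    (hhn : (∫ s in (0:ℝ)..π, ((h s 0) ^ 2 + (h s 1) ^ 2)) = 1)
    (hgn : (∫ s in (0:ℝ)..π, ((g s 0) ^ 2 + (g s 1) ^ 2)) = 1)
    (horth : (∫ s in (0:ℝ)..π, (h s 0 * g s 0 + h s 1 * g s 1)) = 0) :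
    (∫ x in (0:ℝ)..π,
      ((g x 0 - ((Real.exp t - 1) * (∫ s in (0:ℝ)..x, (h s 0 * g s 0 + h s 1 * g s 1)) /
          theta t h x) * h x 0) ^ 2 +
       (g x 1 - ((Real.exp t - 1) * (∫ s in (0:ℝ)..x, (h s 0 * g s 0 + h s 1 * g s 1)) /
          theta t h x) * h x 1) ^ 2)) = 1 := by
  have hπ : (0:ℝ) ≤ π := Real.pi_pos.le
  set p : ℝ → ℝ := fun x => max 0 (min x π) with hpdef
  have hpc : Continuous p := continuous_const.max (continuous_id.min continuous_const)
  have hpm : ∀ x, p x ∈ Icc (0:ℝ) π := fun x =>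
    ⟨le_max_left _ _, max_le hπ (min_le_right x π)⟩
  have hpe : ∀ x ∈ Icc (0:ℝ) π, p x = x := fun x hx => by
    simp only [hpdef]
    rw [min_eq_left hx.2, max_eq_right hx.1]
  set h' : ℝ → Fin 2 → ℝ := fun x => h (p x) with hh'def
  set g' : ℝ → Fin 2 → ℝ := fun x => g (p x) with hg'def
  have hh' : Continuous h' := hh.comp_continuous hpc hpm
  have hg' : Continuous g' := hg.comp_continuous hpc hpm
  have heq : ∀ x ∈ Icc (0:ℝ) π, h' x = h x := fun x hx => by
    simp only [hh'def]; rw [hpe x hx]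
  have geq : ∀ x ∈ Icc (0:ℝ) π, g' x = g x := fun x hx => by
    simp only [hg'def]; rw [hpe x hx]
  have hhn' : (∫ s in (0:ℝ)..π, ((h' s 0) ^ 2 + (h' s 1) ^ 2)) = 1 := by
    rw [intervalIntegral.integral_congr (g := fun s => (h s 0) ^ 2 + (h s 1) ^ 2)
      (fun s hs => by rw [uIcc_of_le hπ] at hs; rw [heq s hs])]
    exact hhn
  have horth' : (∫ s in (0:ℝ)..π, (h' s 0 * g' s 0 + h' s 1 * g' s 1)) = 0 := by
    rw [intervalIntegral.integral_congr (g := fun s => h s 0 * g s 0 + h s 1 * g s 1)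
      (fun s hs => by rw [uIcc_of_le hπ] at hs; rw [heq s hs, geq s hs])]
    exact horth
  have hdint : ∀ x ∈ Icc (0:ℝ) π,
      (∫ s in (0:ℝ)..x, (h' s 0 * g' s 0 + h' s 1 * g' s 1)) =
      (∫ s in (0:ℝ)..x, (h s 0 * g s 0 + h s 1 * g s 1)) := by
    intro x hx
    apply intervalIntegral.integral_congr
    intro s hs
    rw [uIcc_of_le hx.1] at hs
    have hsm : s ∈ Icc (0:ℝ) π := ⟨hs.1, hs.2.trans hx.2⟩
    simp only [heq s hsm, geq s hsm]
  have hθint : ∀ x ∈ Icc (0:ℝ) π, theta t h' x = theta t h x := by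
    intro x hx
    unfold theta
    congr 1
    congr 1
    apply intervalIntegral.integral_congr
    intro s hs
    rw [uIcc_of_le hx.1] at hs
    have hsm : s ∈ Icc (0:ℝ) π := ⟨hs.1, hs.2.trans hx.2⟩
    simp only [heq s hsm]
  have hkey := key t h' g' hh' hg' hhn' horth'
  calc (∫ x in (0:ℝ)..π,
      ((g x 0 - ((Real.exp t - 1) * (∫ s in (0:ℝ)..x, (h s 0 * g s 0 + h s 1 * g s 1)) /
          theta t h x) * h x 0) ^ 2 +
       (g x 1 - ((Real.exp t - 1) * (∫ s in (0:ℝ)..x, (h s 0 * g s 0 + h s 1 * g s 1)) /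
          theta t h x) * h x 1) ^ 2))
      = (∫ x in (0:ℝ)..π,
      ((g' x 0 - ((Real.exp t - 1) * (∫ s in (0:ℝ)..x, (h' s 0 * g' s 0 + h' s 1 * g' s 1)) /
          theta t h' x) * h' x 0) ^ 2 +
       (g' x 1 - ((Real.exp t - 1) * (∫ s in (0:ℝ)..x, (h' s 0 * g' s 0 + h' s 1 * g' s 1)) /
          theta t h' x) * h' x 1) ^ 2)) := by
        apply intervalIntegral.integral_congr
        intro x hx
        rw [uIcc_of_le hπ] at hx
        simp only [heq x hx, geq x hx, hdint x hx, hθint x hx]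
    _ = ∫ x in (0:ℝ)..π, ((g' x 0) ^ 2 + (g' x 1) ^ 2) := hkey
    _ = ∫ x in (0:ℝ)..π, ((g x 0) ^ 2 + (g x 1) ^ 2) := by
        apply intervalIntegral.integral_congr
        intro x hx
        rw [uIcc_of_le hπ] at hx
        simp only [geq x hx]
    _ = 1 := hgn
end
end
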